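/- Let u be C² on the closure of the rectangle K = (x_i,x_{i+1}) × (t_j,t_{j+1}) with σ = f(u) for f ∈ C², and define the discrete divergence div_T f(u) at the midpoint of K by replacing the two boundary-edge integrals in the flux form of the average divergence with composite midpoint rules using n̂ subintervals in time and m̂ subintervals in space. Then for 1 ≤ p ≤ ∞, ‖div_T f(u) − avg_K div f(u)‖_{L^p(K)} ≤ C ( h^{1/p} δ² / n̂² · ‖σ_{tt}(x_{i+1},x_i;·)‖_{L^p(t_j,t_{j+1})} + h² δ^{1/p} / m̂² · ‖u_{xx}(·; t_{j+1}, t_j)‖_{L^p(x_i,x_{i+1})} ). -/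

import Mathlib

/-!
Both halves of `divT - avgK` are, up to the factors `δ⁻¹` and `h⁻¹`, errors of a composite
midpoint rule applied to a `C²` function `φ` of one variable. On a cell of width `w` the
midpoint rule integrates the tangent line at the midpoint exactly, so the first-order Taylor
remainder gives a cell error of at most `w² / 2 · ∫ |φ''|`. Summing over the cells and applying
Hölder's inequality `‖φ''‖₁ ≤ L ^ (1 - 1/p) ‖φ''‖_p` on an interval of length `L` bounds the
error by `(L / n)² / 2 · L ^ (1 - 1/p) ‖φ''‖_p`; multiplying by `|K| ^ (1/p) = (h δ) ^ (1/p)`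
gives the claim with `C = 1 / 2`.
-/

open MeasureTheory ENNReal

/-- Composite midpoint rule with `n` subintervals on `[c,d]`. -/
noncomputable def compMid (φ : ℝ → ℝ) (c d : ℝ) (n : ℕ) : ℝ :=
  ((d - c) / n) * ∑ i ∈ Finset.range n, φ (c + ((i : ℝ) + 1 / 2) * (d - c) / n)

open Set intervalIntegral
open scoped Interval Topology

theorem integral_eq_sub_of_hasDerivAt_of_mem_Icc {f f' : ℝ → ℝ} {a b c d : ℝ}
    (hf : ContinuousOn f (Icc a b)) (hf' : ContinuousOn f' (Icc a b))
    (hderiv : ∀ x ∈ Ioo a b, HasDerivAt f (f' x) x) (hc : c ∈ Icc a b) (hd : d ∈ Icc a b) :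
    ∫ t in c..d, f' t = f d - f c := by
  have hsub : uIcc c d ⊆ Icc a b := uIcc_subset_Icc hc hd
  refine integral_eq_sub_of_hasDeriv_right (hf.mono hsub) (fun x hx => ?_)
    ((hf'.mono hsub).intervalIntegrable)
  have hx' : x ∈ Ioo a b := Ioo_subset_Ioo (le_min hc.1 hd.1) (max_le hc.2 hd.2) hx
  exact (hderiv x hx').hasDerivWithinAt

theorem abs_integral_le_integral_abs_of_mem_Icc {g : ℝ → ℝ} {a b c d : ℝ}
    (hg : IntegrableOn g (Icc a b)) (hc : c ∈ Icc a b) (hd : d ∈ Icc a b) :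
    |∫ t in c..d, g t| ≤ ∫ t in a..b, |g t| := by
  have hab : a ≤ b := hc.1.trans hc.2
  have hsub : Ι c d ⊆ Ioc a b :=
    Ioc_subset_Ioc (le_min hc.1 hd.1) (max_le hc.2 hd.2)
  calc |∫ t in c..d, g t| ≤ ∫ t in Ι c d, |g t| := by
        simpa only [Real.norm_eq_abs] using
          norm_integral_le_integral_norm_uIoc (f := g) (μ := volume)
    _ ≤ ∫ t in Ioc a b, |g t| :=
        setIntegral_mono_set (hg.mono_set Ioc_subset_Icc_self).abs
          (Filter.Eventually.of_forall fun _ => abs_nonneg _) hsub.eventuallyLE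
    _ = ∫ t in a..b, |g t| := (integral_of_le hab).symm

theorem abs_sub_sub_mul_sub_le_mul_integral_abs {φ φ' φ'' : ℝ → ℝ} {a b m t : ℝ}
    (hφ : ContinuousOn φ (Icc a b)) (hφ' : ContinuousOn φ' (Icc a b))
    (hφ'' : ContinuousOn φ'' (Icc a b)) (hd : ∀ x ∈ Ioo a b, HasDerivAt φ (φ' x) x)
    (hd' : ∀ x ∈ Ioo a b, HasDerivAt φ' (φ'' x) x) (hm : m ∈ Icc a b) (ht : t ∈ Icc a b) :
    |φ t - φ m - φ' m * (t - m)| ≤ |t - m| * ∫ s in a..b, |φ'' s| := by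
  have hφ'_osc : ∀ s ∈ Icc a b, |φ' s - φ' m| ≤ ∫ s in a..b, |φ'' s| := fun s hs => by
    rw [← integral_eq_sub_of_hasDerivAt_of_mem_Icc hφ' hφ'' hd' hm hs]
    exact abs_integral_le_integral_abs_of_mem_Icc hφ''.integrableOn_Icc hm hs
  have hremainder : ∫ s in m..t, (φ' s - φ' m) = (φ t - φ' m * t) - (φ m - φ' m * m) :=
    integral_eq_sub_of_hasDerivAt_of_mem_Icc (f := fun t => φ t - φ' m * t)
      (f' := fun s => φ' s - φ' m) (hφ.sub (continuousOn_const.mul continuousOn_id))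
      (hφ'.sub continuousOn_const) (fun x hx => (hd x hx).sub (hasDerivAt_const_mul _)) hm ht
  calc |φ t - φ m - φ' m * (t - m)| = |∫ s in m..t, (φ' s - φ' m)| := by
        rw [hremainder]; ring_nf
    _ ≤ (∫ s in a..b, |φ'' s|) * |t - m| := by
        simpa only [Real.norm_eq_abs] using norm_integral_le_of_norm_le_const fun s hs =>
          (Real.norm_eq_abs _).trans_le (hφ'_osc s (uIcc_subset_Icc hm ht (uIoc_subset_uIcc hs)))
    _ = |t - m| * ∫ s in a..b, |φ'' s| := mul_comm _ _

theorem abs_integral_sub_mul_midpoint_le {φ φ' φ'' : ℝ → ℝ} {a b : ℝ} (hab : a ≤ b)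
    (hφ : ContinuousOn φ (Icc a b)) (hφ' : ContinuousOn φ' (Icc a b))
    (hφ'' : ContinuousOn φ'' (Icc a b)) (hd : ∀ x ∈ Ioo a b, HasDerivAt φ (φ' x) x)
    (hd' : ∀ x ∈ Ioo a b, HasDerivAt φ' (φ'' x) x) :
    |(∫ t in a..b, φ t) - (b - a) * φ ((a + b) / 2)| ≤
      (b - a) ^ 2 / 2 * ∫ t in a..b, |φ'' t| := by
  set m := (a + b) / 2 with hm_def
  set J := ∫ t in a..b, |φ'' t|
  have hm : m ∈ Icc a b := ⟨by rw [hm_def]; linarith, by rw [hm_def]; linarith⟩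
  have hJ : 0 ≤ J := integral_nonneg hab fun _ _ => abs_nonneg _
  have htaylor (t : ℝ) (ht : t ∈ Icc a b) :
      |φ t - φ m - φ' m * (t - m)| ≤ (b - a) / 2 * J := by
    refine (abs_sub_sub_mul_sub_le_mul_integral_abs hφ hφ' hφ'' hd hd' hm ht).trans ?_
    gcongr
    rw [abs_le]
    constructor <;> linarith [ht.1, ht.2]
  have hrepr : (∫ t in a..b, φ t) - (b - a) * φ m =
      ∫ t in a..b, (φ t - φ m - φ' m * (t - m)) := by
    have hφi : IntervalIntegrable φ volume a b := hφ.intervalIntegrable_of_Icc hab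
    rw [integral_sub (hφi.sub intervalIntegrable_const)
        (Continuous.intervalIntegrable (by fun_prop) _ _),
      integral_sub hφi intervalIntegrable_const, intervalIntegral.integral_const_mul,
      integral_sub intervalIntegrable_id intervalIntegrable_const, integral_id]
    simp only [intervalIntegral.integral_const, smul_eq_mul, hm_def]
    ring
  rw [hrepr]
  calc _ ≤ (b - a) / 2 * J * |b - a| := by
        simpa only [Real.norm_eq_abs] using norm_integral_le_of_norm_le_const fun t ht =>
          (Real.norm_eq_abs _).trans_le
            (htaylor t (Ioc_subset_Icc_self (by rwa [uIoc_of_le hab] at ht)))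
    _ = (b - a) ^ 2 / 2 * J := by rw [abs_of_nonneg (sub_nonneg.2 hab)]; ring

theorem abs_integral_sub_compMid_le {φ φ' φ'' : ℝ → ℝ} {c d : ℝ} (hcd : c ≤ d)
    (hφ : ContinuousOn φ (Icc c d)) (hφ' : ContinuousOn φ' (Icc c d))
    (hφ'' : ContinuousOn φ'' (Icc c d)) (hd : ∀ x ∈ Ioo c d, HasDerivAt φ (φ' x) x)
    (hd' : ∀ x ∈ Ioo c d, HasDerivAt φ' (φ'' x) x) {n : ℕ} (hn : 0 < n) :
    |(∫ t in c..d, φ t) - compMid φ c d n| ≤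
      ((d - c) / n) ^ 2 / 2 * ∫ t in c..d, |φ'' t| := by
  set w := (d - c) / n with hw
  have hw0 : 0 ≤ w := div_nonneg (sub_nonneg.2 hcd) n.cast_nonneg
  set x : ℕ → ℝ := fun i => c + i * w with hx
  have hx_succ (i : ℕ) : x (i + 1) = x i + w := by simp only [hx]; push_cast; ring
  have hx_mem {i : ℕ} (hi : i ≤ n) : x i ∈ Icc c d := by
    have hn' : (0 : ℝ) < n := Nat.cast_pos.2 hn
    have : (i : ℝ) * w ≤ d - c := by
      rw [hw, ← mul_div_assoc, div_le_iff₀ hn']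
      exact mul_le_mul_of_nonneg_right (Nat.cast_le.2 hi) (sub_nonneg.2 hcd) |>.trans_eq
        (mul_comm _ _)
    exact ⟨le_add_of_nonneg_right (mul_nonneg i.cast_nonneg hw0), by simp only [hx]; linarith⟩
  have hsub {i : ℕ} (hi : i < n) : Icc (x i) (x (i + 1)) ⊆ Icc c d :=
    Icc_subset_Icc (hx_mem hi.le).1 (hx_mem hi).2
  have hsum {g : ℝ → ℝ} (hg : ContinuousOn g (Icc c d)) :
      ∑ i ∈ Finset.range n, ∫ t in x i..x (i + 1), g t = ∫ t in c..d, g t := by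
    rw [sum_integral_adjacent_intervals fun i hi => (hg.mono (hsub hi)).intervalIntegrable_of_Icc
      (by rw [hx_succ]; linarith)]
    congr 1
    · simp [hx]
    · simp only [hx, hw]; field_simp; ring
  have hcomp : compMid φ c d n = ∑ i ∈ Finset.range n, w * φ ((x i + x (i + 1)) / 2) := by
    rw [compMid, Finset.mul_sum]
    refine Finset.sum_congr rfl fun i _ => ?_
    simp only [hx, hw]
    push_cast
    ring_nf
  have hlocal {i : ℕ} (hi : i < n) :
      |(∫ t in x i..x (i + 1), φ t) - w * φ ((x i + x (i + 1)) / 2)| ≤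
        w ^ 2 / 2 * ∫ t in x i..x (i + 1), |φ'' t| := by
    have hle : x i ≤ x (i + 1) := by rw [hx_succ]; linarith
    have hIoo : Ioo (x i) (x (i + 1)) ⊆ Ioo c d :=
      Ioo_subset_Ioo (hx_mem hi.le).1 (hx_mem hi).2
    have := abs_integral_sub_mul_midpoint_le hle (hφ.mono (hsub hi)) (hφ'.mono (hsub hi))
      (hφ''.mono (hsub hi)) (fun y hy => hd y (hIoo hy)) (fun y hy => hd' y (hIoo hy))
    rwa [hx_succ, add_sub_cancel_left, ← hx_succ] at this
  rw [hcomp, ← hsum hφ, ← hsum hφ''.abs, Finset.mul_sum,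
    ← Finset.sum_sub_distrib]
  exact (Finset.abs_sum_le_sum_abs _ _).trans
    (Finset.sum_le_sum fun i hi => hlocal (Finset.mem_range.1 hi))

theorem integral_norm_le_measureReal_univ_rpow_mul_eLpNorm {α E : Type*} [MeasurableSpace α]
    {μ : Measure α} [IsFiniteMeasure μ] [NormedAddCommGroup E] {G : α → E} {p : ℝ≥0∞}
    (hp : 1 ≤ p) (hG : MemLp G p μ) :
    ∫ x, ‖G x‖ ∂μ ≤ μ.real univ ^ (1 - (1 / p).toReal) * (eLpNorm G p μ).toReal := by
  have hexp : 1 / (1 : ℝ≥0∞).toReal - 1 / p.toReal = 1 - (1 / p).toReal := by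
    simp [ENNReal.toReal_inv, one_div]
  have hexp0 : 0 ≤ 1 - (1 / p).toReal := by
    have : (1 / p).toReal ≤ (1 : ℝ≥0∞).toReal :=
      ENNReal.toReal_mono one_ne_top (by rw [one_div]; exact ENNReal.inv_le_one.2 hp)
    simpa using this
  rw [integral_norm_eq_lintegral_enorm hG.1, ← eLpNorm_one_eq_lintegral_enorm, mul_comm,
    measureReal_def, ENNReal.toReal_rpow, ← ENNReal.toReal_mul, ← hexp]
  refine ENNReal.toReal_mono (ENNReal.mul_ne_top hG.2.ne ?_)
    (eLpNorm_le_eLpNorm_mul_rpow_measure_univ hp hG.1)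
  exact ENNReal.rpow_ne_top_of_nonneg (hexp ▸ hexp0) (measure_ne_top _ _)

theorem abs_integral_sub_compMid_le_eLpNorm {φ : ℝ → ℝ} {c d : ℝ} (hcd : c < d)
    (hφ : ContDiffOn ℝ 2 φ (Icc c d)) {n : ℕ} (hn : 0 < n) {p : ℝ≥0∞} (hp : 1 ≤ p) :
    |(∫ t in c..d, φ t) - compMid φ c d n| ≤ ((d - c) / n) ^ 2 / 2 *
      ((d - c) ^ (1 - (1 / p).toReal) *
        (eLpNorm (deriv (deriv φ)) p (volume.restrict (Ioo c d))).toReal) := by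
  have hu : UniqueDiffOn ℝ (Icc c d) := uniqueDiffOn_Icc hcd
  set φ' := derivWithin φ (Icc c d)
  set φ'' := derivWithin φ' (Icc c d)
  have hφ' : ContDiffOn ℝ 1 φ' (Icc c d) := hφ.derivWithin hu (by norm_num)
  have hφ'' : ContinuousOn φ'' (Icc c d) := hφ'.continuousOn_derivWithin hu le_rfl
  have hasDerivAt_of_Ioo {g : ℝ → ℝ} (hg : DifferentiableOn ℝ g (Icc c d)) {x : ℝ}
      (hx : x ∈ Ioo c d) : HasDerivAt g (derivWithin g (Icc c d) x) x := by
    rw [derivWithin_of_mem_nhds (Icc_mem_nhds hx.1 hx.2)]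
    exact (hg.differentiableAt (Icc_mem_nhds hx.1 hx.2)).hasDerivAt
  have hd (x) (hx : x ∈ Ioo c d) := hasDerivAt_of_Ioo (hφ.differentiableOn (by norm_num)) hx
  have hd' (x) (hx : x ∈ Ioo c d) := hasDerivAt_of_Ioo (hφ'.differentiableOn one_ne_zero) hx
  have hφ''_eq : ∀ x ∈ Ioo c d, deriv (deriv φ) x = φ'' x := fun x hx => by
    have : deriv φ =ᶠ[𝓝 x] φ' :=
      Filter.eventually_of_mem (isOpen_Ioo.mem_nhds hx) fun y hy => (hd y hy).deriv
    rw [this.deriv_eq, (hd' x hx).deriv]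
  obtain ⟨M, hM⟩ := isCompact_Icc.exists_bound_of_continuousOn hφ''
  have hmem : MemLp (deriv (deriv φ)) p (volume.restrict (Ioo c d)) := by
    refine MemLp.of_bound (measurable_deriv _).aestronglyMeasurable M ?_
    refine (ae_restrict_iff' measurableSet_Ioo).2 (Filter.Eventually.of_forall fun x hx => ?_)
    rw [hφ''_eq x hx]
    exact hM x (Ioo_subset_Icc_self hx)
  have hint : ∫ t in c..d, |φ'' t| = ∫ t in Ioo c d, ‖deriv (deriv φ) t‖ := by
    rw [integral_of_le hcd.le, integral_Ioc_eq_integral_Ioo]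
    exact setIntegral_congr_fun measurableSet_Ioo fun x hx => by
      rw [Real.norm_eq_abs, hφ''_eq x hx]
  refine (abs_integral_sub_compMid_le hcd.le hφ.continuousOn hφ'.continuousOn hφ'' hd hd'
    hn).trans ?_
  rw [hint]
  gcongr
  have := integral_norm_le_measureReal_univ_rpow_mul_eLpNorm hp hmem
  rwa [measureReal_restrict_apply_univ, Real.volume_real_Ioo_of_le hcd.le] at this

section Slices

variable {𝕜 E F G : Type*} [NontriviallyNormedField 𝕜]
  [NormedAddCommGroup E] [NormedSpace 𝕜 E] [NormedAddCommGroup F] [NormedSpace 𝕜 F]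
  [NormedAddCommGroup G] [NormedSpace 𝕜 G]
  {n : WithTop ℕ∞} {f : E × F → G} {s : Set E} {t : Set F}

theorem ContDiffOn.comp_prodMk_left (hf : ContDiffOn 𝕜 n f (s ×ˢ t)) {y : F} (hy : y ∈ t) :
    ContDiffOn 𝕜 n (fun x => f (x, y)) s :=
  hf.comp (contDiff_prodMk_left y).contDiffOn fun _ hx => ⟨hx, hy⟩

theorem ContDiffOn.comp_prodMk_right (hf : ContDiffOn 𝕜 n f (s ×ˢ t)) {x : E} (hx : x ∈ s) :
    ContDiffOn 𝕜 n (fun y => f (x, y)) t :=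
  hf.comp (contDiff_prodMk_right x).contDiffOn fun _ hy => ⟨hx, hy⟩

end Slices

/-- The left side is the `Lᵖ(c, d)` norm of the constant `(d - c)⁻¹ (∫ φ - compMid φ)`. -/
theorem inv_mul_abs_integral_sub_compMid_mul_rpow_le {φ : ℝ → ℝ} {c d : ℝ} (hcd : c < d)
    (hφ : ContDiffOn ℝ 2 φ (Icc c d)) {n : ℕ} (hn : 0 < n) {p : ℝ≥0∞} (hp : 1 ≤ p) :
    (d - c)⁻¹ * |(∫ t in c..d, φ t) - compMid φ c d n| * (d - c) ^ (1 / p).toReal ≤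
      (d - c) ^ 2 / n ^ 2 / 2 *
        (eLpNorm (deriv (deriv φ)) p (volume.restrict (Ioo c d))).toReal := by
  set N := (eLpNorm (deriv (deriv φ)) p (volume.restrict (Ioo c d))).toReal
  have hL : 0 < d - c := sub_pos.2 hcd
  have hrpow : (d - c) ^ (1 - (1 / p).toReal) * (d - c) ^ (1 / p).toReal = d - c := by
    rw [← Real.rpow_add hL, sub_add_cancel, Real.rpow_one]
  calc _ ≤ (d - c)⁻¹ * (((d - c) / n) ^ 2 / 2 * ((d - c) ^ (1 - (1 / p).toReal) * N)) *
          (d - c) ^ (1 / p).toReal := by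
        gcongr
        exact abs_integral_sub_compMid_le_eLpNorm hcd hφ hn hp
    _ = (d - c)⁻¹ * ((d - c) ^ 2 / n ^ 2 / 2) * N *
          ((d - c) ^ (1 - (1 / p).toReal) * (d - c) ^ (1 / p).toReal) := by ring
    _ = _ := by
        rw [hrpow]
        field_simp

/-- Error of the composite-midpoint discrete divergence operator on a rectangle
for a `C²` solution `u` and `C²` flux `f` (with `σ = f(u)`):
`‖div_T f(u) − avg_K div f(u)‖_{L^p(K)}
  ≤ C ( h^{1/p} δ²/n̂² ‖σ_{tt}‖_{L^p(t_j,t_{j+1})} + h² δ^{1/p}/m̂² ‖u_{xx}‖_{L^p(x_i,x_{i+1})} )`. -/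
theorem discrete_div_error_smooth (p : ℝ≥0∞) (hp : 1 ≤ p) :
    ∃ C > (0 : ℝ), ∀ (f : ℝ → ℝ), ContDiff ℝ 2 f →
      ∀ (u : ℝ → ℝ → ℝ) (xi xi1 tj tj1 : ℝ), xi < xi1 → tj < tj1 →
      ContDiffOn ℝ 2 (fun z : ℝ × ℝ => u z.1 z.2) (Set.Icc xi xi1 ×ˢ Set.Icc tj tj1) →
      ∀ (mhat nhat : ℕ), 0 < mhat → 0 < nhat →
      let h := xi1 - xi
      let δ := tj1 - tj
      let σq : ℝ → ℝ := fun t => (f (u xi1 t) - f (u xi t)) / h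
      let uq : ℝ → ℝ := fun x => (u x tj1 - u x tj) / δ
      let divT : ℝ := δ⁻¹ * compMid σq tj tj1 nhat + h⁻¹ * compMid uq xi xi1 mhat
      let avgK : ℝ := δ⁻¹ * (∫ t in tj..tj1, σq t) + h⁻¹ * (∫ x in xi..xi1, uq x)
      |divT - avgK| * (h * δ) ^ ((1 / p).toReal) ≤
        C * (h ^ ((1 / p).toReal) * δ ^ 2 / (nhat : ℝ) ^ 2 *
              (eLpNorm (deriv (deriv σq)) p (volume.restrict (Set.Ioo tj tj1))).toReal
          + h ^ 2 * δ ^ ((1 / p).toReal) / (mhat : ℝ) ^ 2 *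
              (eLpNorm (deriv (deriv uq)) p (volume.restrict (Set.Ioo xi xi1))).toReal) := by
  refine ⟨1 / 2, one_half_pos, ?_⟩
  intro f hf u xi xi1 tj tj1 hx ht hu mhat nhat hm hn h δ σq uq divT avgK
  have hσq : ContDiffOn ℝ 2 σq (Icc tj tj1) :=
    ((hf.comp_contDiffOn (hu.comp_prodMk_right (right_mem_Icc.2 hx.le))).sub
      (hf.comp_contDiffOn (hu.comp_prodMk_right (left_mem_Icc.2 hx.le)))).div_const h
  have huq : ContDiffOn ℝ 2 uq (Icc xi xi1) :=
    ((hu.comp_prodMk_left (right_mem_Icc.2 ht.le)).sub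
      (hu.comp_prodMk_left (left_mem_Icc.2 ht.le))).div_const δ
  have hh : 0 < h := sub_pos.2 hx
  have hδ : 0 < δ := sub_pos.2 ht
  have hσ_err := inv_mul_abs_integral_sub_compMid_mul_rpow_le ht hσq hn hp
  have hu_err := inv_mul_abs_integral_sub_compMid_mul_rpow_le hx huq hm hp
  set e := (1 / p).toReal
  set Eσ := |(∫ t in tj..tj1, σq t) - compMid σq tj tj1 nhat|
  set Eu := |(∫ x in xi..xi1, uq x) - compMid uq xi xi1 mhat|
  have hsplit : |divT - avgK| ≤ δ⁻¹ * Eσ + h⁻¹ * Eu := by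
    have hdiff : divT - avgK = δ⁻¹ * (compMid σq tj tj1 nhat - ∫ t in tj..tj1, σq t) +
        h⁻¹ * (compMid uq xi xi1 mhat - ∫ x in xi..xi1, uq x) := by
      simp only [divT, avgK]
      ring
    rw [hdiff]
    refine (abs_add_le _ _).trans_eq ?_
    rw [abs_mul, abs_mul, abs_of_pos (inv_pos.2 hδ), abs_of_pos (inv_pos.2 hh), abs_sub_comm,
      abs_sub_comm (compMid uq xi xi1 mhat)]
  calc |divT - avgK| * (h * δ) ^ e ≤ (δ⁻¹ * Eσ + h⁻¹ * Eu) * (h ^ e * δ ^ e) := by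
        rw [Real.mul_rpow hh.le hδ.le]
        gcongr
    _ = h ^ e * (δ⁻¹ * Eσ * δ ^ e) + δ ^ e * (h⁻¹ * Eu * h ^ e) := by ring
    _ ≤ _ := by
        grw [hσ_err, hu_err]
        apply le_of_eq
        simp only [h, δ]
        ring
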